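/- There exists a function f : ℕ → ℝ whose time-scale symmetric derivative on ℕ (given at each point n ≥ 1 by (f(n+1) - f(n-1))/2) is strictly positive at every n ≥ 1, yet f is not monotone increasing. -/

import Mathlib

/-!
Multiplying the even-indexed values of the identity by 10 keeps `f n < f (n + 2)`, which is all
the central difference `f (n + 1) - f (n - 1)` sees, while `f 2 = 20 > 3 = f 3` breaks
monotonicity.
-/

theorem centralDiff_pos_of_lt_add_two {α : Type*} [AddCommGroup α] [PartialOrder α]
    [IsOrderedAddMonoid α] {f : ℕ → α} (hf : ∀ n, f n < f (n + 2)) {n : ℕ} (hn : 1 ≤ n) :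
    0 < f (n + 1) - f (n - 1) := by
  obtain ⟨m, rfl⟩ := Nat.exists_eq_add_of_le' hn
  exact sub_pos.2 (hf m)

noncomputable def scaleEvenByTen (n : ℕ) : ℝ := if Even n then 10 * n else n

theorem scaleEvenByTen_lt_add_two (n : ℕ) : scaleEvenByTen n < scaleEvenByTen (n + 2) := by
  have hparity : Even (n + 2) ↔ Even n := by simp [Nat.even_add]
  unfold scaleEvenByTen
  rw [if_congr hparity rfl rfl]
  split_ifs <;> push_cast <;> linarith

theorem not_monotone_scaleEvenByTen : ¬ Monotone scaleEvenByTen := fun h => by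
  have h23 := h (show 2 ≤ 3 by norm_num)
  norm_num [scaleEvenByTen] at h23

theorem exists_pos_symDeriv_not_monotone :
    ∃ f : ℕ → ℝ, (∀ n : ℕ, 1 ≤ n → 0 < (f (n + 1) - f (n - 1)) / 2) ∧ ¬ Monotone f :=
  ⟨scaleEvenByTen,
    fun _ hn => half_pos (centralDiff_pos_of_lt_add_two scaleEvenByTen_lt_add_two hn),
    not_monotone_scaleEvenByTen⟩
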